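/- For all natural numbers r, s with r > s ≥ 1, the following identity holds in ℤ[x, y]: (x − y)·(r·x^{r−1}·y^{s} − s·x^{r}·y^{s−1}) − (x^r·y^s − x^s·y^r) = (x − y)²·( −s·x^{r−1}·y^{s−1} + ∑_{ℓ=1}^{r−s−1} (r − s − ℓ)·x^{r−1−ℓ}·y^{s−1+ℓ} ), where an empty sum is zero. -/
import Mathlib


open MvPolynomial

local notation "x" => (MvPolynomial.X 0 : MvPolynomial (Fin 2) ℤ)
local notation "y" => (MvPolynomial.X 1 : MvPolynomial (Fin 2) ℤ)

private lemma key (a : ℕ) :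
    (x - y) * ((a : MvPolynomial (Fin 2) ℤ) * x ^ a * y) - x * y * (x ^ a - y ^ a)
      = (x - y) ^ 2 * ∑ k ∈ Finset.range a,
          (k : MvPolynomial (Fin 2) ℤ) * x ^ k * y ^ (a - k) := by
  induction a with
  | zero => simp
  | succ a ih =>
    rw [Finset.sum_range_succ]
    have h : ∑ k ∈ Finset.range a,
        (k : MvPolynomial (Fin 2) ℤ) * x ^ k * y ^ (a + 1 - k)
        = y * ∑ k ∈ Finset.range a,
            (k : MvPolynomial (Fin 2) ℤ) * x ^ k * y ^ (a - k) := by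
      rw [Finset.mul_sum]
      refine Finset.sum_congr rfl fun k hk => ?_
      have hk' : a + 1 - k = (a - k) + 1 := by
        have := Finset.mem_range.mp hk; omega
      rw [hk', pow_succ]; ring
    rw [h, Nat.add_sub_cancel_left]
    push_cast
    linear_combination y * ih

private lemma reindex (a b : ℕ) (ha : 1 ≤ a) :
    ∑ ℓ ∈ Finset.Icc 1 (a - 1),
        ((a - ℓ : ℕ) : MvPolynomial (Fin 2) ℤ) * x ^ (b + a - ℓ) * y ^ (b + ℓ)
      = x ^ b * y ^ b * ∑ k ∈ Finset.range a,
          (k : MvPolynomial (Fin 2) ℤ) * x ^ k * y ^ (a - k) := by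
  rw [Finset.mul_sum]
  have hins : Finset.range a = insert 0 (Finset.Icc 1 (a - 1)) := by
    ext n; simp [Finset.mem_range, Finset.mem_Icc]; omega
  rw [hins, Finset.sum_insert (by simp)]
  simp only [Nat.cast_zero, zero_mul, mul_zero, zero_add, pow_zero]
  refine Finset.sum_nbij' (fun ℓ => a - ℓ) (fun k => a - k) ?_ ?_ ?_ ?_ ?_
  · intro ℓ hℓ; simp only [Finset.mem_Icc] at *; omega
  · intro k hk; simp only [Finset.mem_Icc] at *; omega
  · intro ℓ hℓ; simp only [Finset.mem_Icc] at hℓ; show a - (a - ℓ) = ℓ; omega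
  · intro k hk; simp only [Finset.mem_Icc] at hk; show a - (a - k) = k; omega
  · intro ℓ hℓ
    simp only [Finset.mem_Icc] at hℓ
    have h1 : a - (a - ℓ) = ℓ := by omega
    have h2 : b + a - ℓ = b + (a - ℓ) := by omega
    have h3 : b + ℓ = b + ℓ := rfl
    rw [h1, h2, pow_add, pow_add]
    ring

/-- Eq. (3.21) of the paper; Case II, `r > s`.  For `r > s ≥ 1`,
`(x-y)(r x^{r-1} y^s - s x^r y^{s-1}) - (x^r y^s - x^s y^r)
  = (x-y)² ( -s x^{r-1} y^{s-1} + ∑_{ℓ=1}^{r-s-1} (r-s-ℓ) x^{r-1-ℓ} y^{s-1+ℓ} )`,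
with an empty sum equal to zero. -/
theorem caseII_theta1_rgts (r s : ℕ) (hs : 1 ≤ s) (hrs : s < r) :
    (x - y) * ((r : MvPolynomial (Fin 2) ℤ) * x ^ (r - 1) * y ^ s
        - (s : MvPolynomial (Fin 2) ℤ) * x ^ r * y ^ (s - 1))
      - (x ^ r * y ^ s - x ^ s * y ^ r)
    = (x - y) ^ 2 *
        (-(s : MvPolynomial (Fin 2) ℤ) * x ^ (r - 1) * y ^ (s - 1)
          + ∑ ℓ ∈ Finset.Icc 1 (r - s - 1),
              ((r - s - ℓ : ℕ) : MvPolynomial (Fin 2) ℤ)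
                * x ^ (r - 1 - ℓ) * y ^ (s - 1 + ℓ)) := by
  obtain ⟨b, rfl⟩ : ∃ b, s = b + 1 := ⟨s - 1, by omega⟩
  obtain ⟨a, rfl⟩ : ∃ a, r = b + 1 + a := ⟨r - (b + 1), by omega⟩
  have ha : 1 ≤ a := by omega
  have e1 : b + 1 + a - 1 = b + a := by omega
  have e2 : b + 1 - 1 = b := by omega
  have e3 : b + 1 + a - (b + 1) = a := by omega
  have e4 : ∀ ℓ, b + 1 + a - 1 - ℓ = b + a - ℓ := by omega
  have e5 : ∀ ℓ, b + 1 - 1 + ℓ = b + ℓ := by omega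
  simp only [e1, e2, e3, e4, e5]
  rw [reindex a b ha]
  have h1 : (x : MvPolynomial (Fin 2) ℤ) ^ (b + a) = x ^ b * x ^ a := by rw [pow_add]
  have h2 : (x : MvPolynomial (Fin 2) ℤ) ^ (b + 1 + a) = x ^ b * x ^ a * x := by
    rw [pow_add, pow_add, pow_one]; ring
  have h3 : (y : MvPolynomial (Fin 2) ℤ) ^ (b + 1) = y ^ b * y := by rw [pow_succ]
  have h4 : (y : MvPolynomial (Fin 2) ℤ) ^ (b + 1 + a) = y ^ b * y ^ a * y := by
    rw [pow_add, pow_add, pow_one]; ring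
  have h5 : (x : MvPolynomial (Fin 2) ℤ) ^ (b + 1) = x ^ b * x := by rw [pow_succ]
  rw [h1, h2, h3, h4, h5]
  push_cast
  linear_combination (x ^ b * y ^ b) * key a
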